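/- arXiv:1401.5884 — 2 statements merged into one kernel-verified Lean document; each statement's English description precedes it below -/
import Mathlib

section
/- Suppose q_i(t) = T_k(At)Q_i, i = 1,...,n, with Q_i ∈ S^{k-1} ⊂ ℝᵏ (k = 2p), solves the curved n-body equations q̈_i = Σ_{j≠i} m_j (q_j − ⟨q_i,q_j⟩ q_i)/(1 − ⟨q_i,q_j⟩²)^{3/2} − ⟨q̇_i, q̇_i⟩ q_i. Then the configuration satisfies the algebraic system −𝐀²Q_i = Σ_{j≠i} m_j (Q_j − ⟨Q_i,Q_j⟩ Q_i)/(1 − ⟨Q_i,Q_j⟩²)^{3/2} − ‖𝐀Q_i‖² Q_i for each i. -/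
open scoped RealInnerProductSpace

/-- The 2×2 rotation matrix `T(t)`. -/
noncomputable def rot (t : ℝ) : Matrix (Fin 2) (Fin 2) ℝ :=
  !![Real.cos t, -Real.sin t; Real.sin t, Real.cos t]
/-- The block-diagonal matrix `T_k(At)` with 2×2 rotation blocks `T(A_l t)`, `k = 2p`. -/
noncomputable def blockRot (p : ℕ) (A : Fin p → ℝ) (t : ℝ) :
    Matrix (Fin (2 * p)) (Fin (2 * p)) ℝ := fun i j =>
  if (i : ℕ) / 2 = (j : ℕ) / 2 then
    rot (A ⟨(i : ℕ) / 2, by have := i.isLt; omega⟩ * t)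
      ⟨(i : ℕ) % 2, by omega⟩ ⟨(j : ℕ) % 2, by omega⟩
  else 0
/-- The diagonal matrix `𝐀 = diag(A₁,A₁,...,A_p,A_p)`. -/
noncomputable def bigA (p : ℕ) (A : Fin p → ℝ) : Matrix (Fin (2 * p)) (Fin (2 * p)) ℝ :=
  Matrix.diagonal fun i => A ⟨(i : ℕ) / 2, by have := i.isLt; omega⟩
/-- Application of a matrix to a vector of Euclidean space. -/
noncomputable def apM {k : ℕ} (M : Matrix (Fin k) (Fin k) ℝ) (x : EuclideanSpace ℝ (Fin k)) :
    EuclideanSpace ℝ (Fin k) := WithLp.toLp 2 (M.mulVec x)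

/-!
Each coordinate of `q_i(t) = T_k(At) Q_i` is a sinusoid `c cos(a t) + d sin(a t)`, with `a` the
frequency of its block, and differentiating twice multiplies it by `-a²`; hence `q̈_i(0) = -𝐀²Q_i`.
The velocity `q̇_i(0)` is `𝐀Q_i` with the two coordinates of each block swapped, up to sign, so
`‖q̇_i(0)‖ = ‖𝐀Q_i‖`. Evaluating the equations of motion at `t = 0`, where `q_i(0) = Q_i`, gives
the system.
-/

open Real

noncomputable def sinusoid (a c d s : ℝ) : ℝ := c * cos (a * s) + d * sin (a * s)

@[simp] lemma sinusoid_zero (a c d : ℝ) : sinusoid a c d 0 = c := by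
  simp [sinusoid]

lemma hasDerivAt_sinusoid (a c d t : ℝ) :
    HasDerivAt (sinusoid a c d) (sinusoid a (a * d) (-(a * c)) t) t := by
  have hlin : HasDerivAt (fun s : ℝ => a * s) a t := by
    simpa using (hasDerivAt_id t).const_mul a
  have h : HasDerivAt (fun s => c * cos (a * s) + d * sin (a * s))
      (c * (-sin (a * t) * a) + d * (cos (a * t) * a)) t :=
    (((hasDerivAt_cos _).comp t hlin).const_mul c).add
      (((hasDerivAt_sin _).comp t hlin).const_mul d)
  exact h.congr_deriv (by simp only [sinusoid]; ring)

section SinusoidVec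

variable {ι : Type*}

noncomputable def sinusoidVec (a c d : ι → ℝ) (s : ℝ) : EuclideanSpace ℝ ι :=
  WithLp.toLp 2 fun i => sinusoid (a i) (c i) (d i) s

@[simp] lemma sinusoidVec_zero (a c d : ι → ℝ) : sinusoidVec a c d 0 = WithLp.toLp 2 c := by
  simp [sinusoidVec]

variable [Fintype ι]

lemma HasDerivAt.toLp {φ : ℝ → ι → ℝ} {φ' : ι → ℝ} {t : ℝ} (h : HasDerivAt φ φ' t) :
    HasDerivAt (fun s => WithLp.toLp 2 (φ s)) (WithLp.toLp 2 φ') t :=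
  (PiLp.hasFDerivAt_toLp (𝕜 := ℝ) 2 (φ t)).comp_hasDerivAt t h

lemma deriv_sinusoidVec (a c d : ι → ℝ) :
    deriv (sinusoidVec a c d) = sinusoidVec a (a * d) (-(a * c)) := by
  funext t
  exact (hasDerivAt_pi.2 fun i => hasDerivAt_sinusoid _ _ _ t).toLp.deriv

end SinusoidVec

section Blocks

variable {p : ℕ}

def blockFreq (A : Fin p → ℝ) (i : Fin (2 * p)) : ℝ := A ⟨(i : ℕ) / 2, by omega⟩

def blockPartner (i : Fin (2 * p)) : Fin (2 * p) :=
  ⟨2 * ((i : ℕ) / 2) + (1 - (i : ℕ) % 2), by omega⟩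

def blockSign (i : Fin (2 * p)) : ℝ := if (i : ℕ) % 2 = 0 then -1 else 1

lemma blockPartner_involutive : Function.Involutive (blockPartner (p := p)) := by
  intro i
  ext
  simp only [blockPartner]
  omega

lemma sum_comp_blockPartner (f : Fin (2 * p) → ℝ) : ∑ i, f (blockPartner i) = ∑ i, f i :=
  Equiv.sum_comp (blockPartner_involutive.toPerm _) f

lemma blockFreq_blockPartner (A : Fin p → ℝ) (i : Fin (2 * p)) :
    blockFreq A (blockPartner i) = blockFreq A i := by
  simp only [blockFreq, blockPartner]
  congr 2
  omega

lemma blockSign_sq (i : Fin (2 * p)) : blockSign i ^ 2 = 1 := by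
  unfold blockSign; split_ifs <;> norm_num

lemma rot_apply (t : ℝ) (b c : Fin 2) :
    rot t b c = if b = c then cos t else if b = 0 then -sin t else sin t := by
  fin_cases b <;> fin_cases c <;> simp [rot]

lemma blockRot_apply (A : Fin p → ℝ) (s : ℝ) (i j : Fin (2 * p)) :
    blockRot p A s i j =
      if j = i then cos (blockFreq A i * s)
      else if j = blockPartner i then blockSign i * sin (blockFreq A i * s) else 0 := by
  unfold blockRot
  rw [rot_apply]
  simp only [Fin.ext_iff, blockPartner, blockSign, blockFreq, Fin.val_zero]
  split_ifs <;> first | omega | simp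

lemma blockRot_mulVec (A : Fin p → ℝ) (s : ℝ) (x : Fin (2 * p) → ℝ) (i : Fin (2 * p)) :
    (blockRot p A s).mulVec x i =
      sinusoid (blockFreq A i) (x i) (blockSign i * x (blockPartner i)) s := by
  have hne : i ≠ blockPartner i := fun h => by simp only [Fin.ext_iff, blockPartner] at h; omega
  rw [Matrix.mulVec, dotProduct, Fintype.sum_eq_add i (blockPartner i) hne fun j hj => by
    simp [blockRot_apply, hj.1, hj.2]]
  simp only [blockRot_apply, ↓reduceIte, hne.symm, sinusoid]
  ring

lemma apM_blockRot (A : Fin p → ℝ) (x : EuclideanSpace ℝ (Fin (2 * p))) :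
    (fun s => apM (blockRot p A s) x) =
      sinusoidVec (blockFreq A) x.ofLp (fun i => blockSign i * x (blockPartner i)) := by
  funext s
  simp only [apM, sinusoidVec]
  congr 1
  funext i
  exact blockRot_mulVec A s x.ofLp i

lemma apM_blockRot_zero (A : Fin p → ℝ) (x : EuclideanSpace ℝ (Fin (2 * p))) :
    apM (blockRot p A 0) x = x := by
  rw [congrFun (apM_blockRot A x) 0, sinusoidVec_zero, WithLp.toLp_ofLp]

lemma bigA_mulVec (A : Fin p → ℝ) (v : Fin (2 * p) → ℝ) :
    (bigA p A).mulVec v = blockFreq A * v :=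
  funext fun i => Matrix.mulVec_diagonal _ _ i

lemma apM_bigA (A : Fin p → ℝ) (x : EuclideanSpace ℝ (Fin (2 * p))) :
    apM (bigA p A) x = WithLp.toLp 2 (blockFreq A * x.ofLp) := by
  rw [apM, bigA_mulVec]

lemma apM_bigA_sq (A : Fin p → ℝ) (x : EuclideanSpace ℝ (Fin (2 * p))) :
    apM (bigA p A ^ 2) x = WithLp.toLp 2 (blockFreq A * (blockFreq A * x.ofLp)) := by
  rw [apM, pow_two, ← Matrix.mulVec_mulVec, bigA_mulVec, bigA_mulVec]

lemma norm_blockVelocity (A : Fin p → ℝ) (x : EuclideanSpace ℝ (Fin (2 * p))) :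
    ‖WithLp.toLp 2 (blockFreq A * fun i => blockSign i * x (blockPartner i))‖ =
      ‖apM (bigA p A) x‖ := by
  rw [apM_bigA, EuclideanSpace.norm_eq, EuclideanSpace.norm_eq]
  congr 1
  calc ∑ i, ‖(blockFreq A * fun i => blockSign i * x (blockPartner i)) i‖ ^ 2
      = ∑ i, (blockFreq A (blockPartner i) * x (blockPartner i)) ^ 2 := by
        refine Finset.sum_congr rfl fun i _ => ?_
        rw [Real.norm_eq_abs, sq_abs, blockFreq_blockPartner, Pi.mul_apply, mul_pow, mul_pow,
          blockSign_sq, one_mul, mul_pow]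
    _ = ∑ i, ‖(blockFreq A * x.ofLp) i‖ ^ 2 := by
        rw [sum_comp_blockPartner fun i => (blockFreq A i * x i) ^ 2]
        simp only [Real.norm_eq_abs, sq_abs, Pi.mul_apply]

end Blocks

theorem relEq_of_solution_general (p n : ℕ) (A : Fin p → ℝ) (m : Fin n → ℝ)
    (Q : Fin n → EuclideanSpace ℝ (Fin (2 * p)))
    (hsol : ∀ (i : Fin n) (t : ℝ),
      deriv (deriv (fun s => apM (blockRot p A s) (Q i))) t =
        (∑ j ∈ Finset.univ.erase i,
          (m j / (1 - ⟪apM (blockRot p A t) (Q i), apM (blockRot p A t) (Q j)⟫ ^ 2)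
              ^ ((3 : ℝ) / 2)) •
            (apM (blockRot p A t) (Q j) -
              ⟪apM (blockRot p A t) (Q i), apM (blockRot p A t) (Q j)⟫ •
                apM (blockRot p A t) (Q i)))
        - ⟪deriv (fun s => apM (blockRot p A s) (Q i)) t,
            deriv (fun s => apM (blockRot p A s) (Q i)) t⟫ • apM (blockRot p A t) (Q i)) :
    ∀ i : Fin n,
      -apM (bigA p A ^ 2) (Q i) =
        (∑ j ∈ Finset.univ.erase i,
          (m j / (1 - ⟪Q i, Q j⟫ ^ 2) ^ ((3 : ℝ) / 2)) • (Q j - ⟪Q i, Q j⟫ • Q i))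
        - ‖apM (bigA p A) (Q i)‖ ^ 2 • Q i := by
  intro i
  have h0 := hsol i 0
  rw [apM_blockRot A (Q i), deriv_sinusoidVec, deriv_sinusoidVec, sinusoidVec_zero,
    sinusoidVec_zero, real_inner_self_eq_norm_sq, norm_blockVelocity] at h0
  simp only [apM_blockRot_zero] at h0
  rw [apM_bigA_sq, ← h0, mul_neg, WithLp.toLp_neg]

/-- If `q_i(t) = T_k(At) Q_i` solves the curved `n`-body equations, then the configuration
`Q_1, ..., Q_n` satisfies the algebraic relative-equilibrium system. -/
theorem relEq_of_solution (p n : ℕ) (A : Fin p → ℝ) (m : Fin n → ℝ)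
    (Q : Fin n → EuclideanSpace ℝ (Fin (2 * p)))
    (hm : ∀ j, 0 < m j) (hQ : ∀ i, ‖Q i‖ = 1)
    (hsep : ∀ i j, i ≠ j → ⟪Q i, Q j⟫ ^ 2 ≠ 1)
    (hsol : ∀ (i : Fin n) (t : ℝ),
      deriv (deriv (fun s => apM (blockRot p A s) (Q i))) t =
        (∑ j ∈ Finset.univ.erase i,
          (m j / (1 - ⟪apM (blockRot p A t) (Q i), apM (blockRot p A t) (Q j)⟫ ^ 2)
              ^ ((3 : ℝ) / 2)) •
            (apM (blockRot p A t) (Q j) -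
              ⟪apM (blockRot p A t) (Q i), apM (blockRot p A t) (Q j)⟫ •
                apM (blockRot p A t) (Q i)))
        - ⟪deriv (fun s => apM (blockRot p A s) (Q i)) t,
            deriv (fun s => apM (blockRot p A s) (Q i)) t⟫ • apM (blockRot p A t) (Q i)) :
    ∀ i : Fin n,
      -apM (bigA p A ^ 2) (Q i) =
        (∑ j ∈ Finset.univ.erase i,
          (m j / (1 - ⟪Q i, Q j⟫ ^ 2) ^ ((3 : ℝ) / 2)) • (Q j - ⟪Q i, Q j⟫ • Q i))
        - ‖apM (bigA p A) (Q i)‖ ^ 2 • Q i :=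
  relEq_of_solution_general p n A m Q hsol
end

section
/- If Q_i, i = 1,...,n, lie on S^{k-1} and satisfy −𝐀²Q_i = Σ_{j≠i} m_j (Q_j − ⟨Q_i,Q_j⟩ Q_i)/(1 − ⟨Q_i,Q_j⟩²)^{3/2} − ‖𝐀Q_i‖² Q_i, then q_i(t) = T_k(At)Q_i is a solution of the curved n-body equations q̈_i = Σ_{j≠i} m_j (q_j − ⟨q_i,q_j⟩ q_i)/(1 − ⟨q_i,q_j⟩²)^{3/2} − ⟨q̇_i,q̇_i⟩ q_i. -/
open scoped RealInnerProductSpace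

/-! The matrix `T_k(At)` is orthogonal, so `q_i(t) = T_k(At) Q_i` has the same mutual inner
products as the `Q_i`, and applying `T_k(At)` to the relative-equilibrium relation produces the
right-hand side of the equations of motion at time `t`. Differentiating a rotation shifts its
angle by `π / 2`, hence `q̇_i = T_k(At + π/2) 𝐀 Q_i` (so `⟨q̇_i, q̇_i⟩ = ‖𝐀 Q_i‖²`) and
`q̈_i = T_k(At + π) 𝐀² Q_i = T_k(At) (-𝐀² Q_i)`. -/

open Matrix

section UnitaryGroup

variable {α : Type*} [CommRing α] [StarRing α] {m n o : Type*}
  [Fintype m] [DecidableEq m] [Fintype n] [DecidableEq n] [Fintype o] [DecidableEq o]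

lemma reindexAlgEquiv_mem_unitaryGroup (e : m ≃ n) {U : Matrix m m α}
    (hU : U ∈ unitaryGroup m α) : reindexAlgEquiv α α e U ∈ unitaryGroup n α := by
  rw [mem_unitaryGroup_iff'] at hU ⊢
  rw [star_eq_conjTranspose, coe_reindexAlgEquiv, conjTranspose_reindex,
    ← coe_reindexAlgEquiv α α, ← map_mul, ← star_eq_conjTranspose, hU, map_one]

lemma blockDiagonal_mem_unitaryGroup {U : o → Matrix m m α}
    (hU : ∀ k, U k ∈ unitaryGroup m α) : blockDiagonal U ∈ unitaryGroup (m × o) α := by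
  simp only [mem_unitaryGroup_iff', star_eq_conjTranspose] at hU ⊢
  rw [blockDiagonal_conjTranspose, ← blockDiagonal_mul]
  simp only [hU]
  exact blockDiagonal_one

end UnitaryGroup

lemma inner_toEuclideanCLM_of_mem_unitaryGroup {𝕜 : Type*} [RCLike 𝕜] {n : Type*} [Fintype n]
    [DecidableEq n] {U : Matrix n n 𝕜} (hU : U ∈ unitaryGroup n 𝕜) (x y : EuclideanSpace 𝕜 n) :
    inner 𝕜 (toEuclideanCLM (𝕜 := 𝕜) U x) (toEuclideanCLM (𝕜 := 𝕜) U y) = inner 𝕜 x y :=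
  ContinuousLinearMap.inner_map_map_of_mem_unitary (Unitary.map_mem toEuclideanCLM hU) x y

section apM

variable {k : ℕ}

lemma apM_eq_toEuclideanCLM (M : Matrix (Fin k) (Fin k) ℝ) :
    apM M = toEuclideanCLM (𝕜 := ℝ) M := rfl

lemma apM_mul (M N : Matrix (Fin k) (Fin k) ℝ) (x : EuclideanSpace ℝ (Fin k)) :
    apM (M * N) x = apM M (apM N x) := by
  simp [apM, mulVec_mulVec]

lemma hasDerivAt_apM {F : ℝ → Matrix (Fin k) (Fin k) ℝ} {F' : Matrix (Fin k) (Fin k) ℝ} {t : ℝ}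
    (h : ∀ i j, HasDerivAt (fun s => F s i j) (F' i j) t) (x : EuclideanSpace ℝ (Fin k)) :
    HasDerivAt (fun s => apM (F s) x) (apM F' x) t := by
  have hmulVec : HasDerivAt (fun s => F s *ᵥ x) (F' *ᵥ x) t :=
    hasDerivAt_pi.2 fun i =>
      HasDerivAt.fun_sum (u := Finset.univ) fun j _ => (h i j).mul_const (x j)
  exact (PiLp.hasFDerivAt_toLp 2 _).comp_hasDerivAt t hmulVec

end apM

lemma rot_mem_unitaryGroup (x : ℝ) : rot x ∈ unitaryGroup (Fin 2) ℝ := by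
  rw [mem_unitaryGroup_iff']
  ext i j
  fin_cases i <;> fin_cases j <;> simp [rot, mul_apply, Fin.sum_univ_two, ← sq, mul_comm]

lemma rot_add_pi (x : ℝ) : rot (x + Real.pi) = -rot x := by
  ext i j
  fin_cases i <;> fin_cases j <;> simp [rot]

lemma hasDerivAt_rot_apply (a c t : ℝ) (i j : Fin 2) :
    HasDerivAt (fun s => rot (a * s + c) i j) ((a • rot (a * t + c + Real.pi / 2)) i j) t := by
  have hangle : HasDerivAt (fun s => a * s + c) a t := by
    simpa using ((hasDerivAt_id t).const_mul a).add_const c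
  fin_cases i <;> fin_cases j <;>
    simp only [rot, Fin.zero_eta, Fin.mk_one, Fin.isValue, of_apply, cons_val', cons_val_zero,
      cons_val_one, cons_val_fin_one, Real.cos_add_pi_div_two, Real.sin_add_pi_div_two,
      Matrix.smul_apply, smul_eq_mul, mul_neg]
  · exact hangle.cos.congr_deriv (by ring)
  · exact hangle.sin.neg.congr_deriv (by ring)
  · exact hangle.sin.congr_deriv (by ring)
  · exact hangle.cos.congr_deriv (by ring)

def blockEquiv (p : ℕ) : Fin 2 × Fin p ≃ Fin (2 * p) where
  toFun x := ⟨2 * x.2 + x.1, by omega⟩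
  invFun i := (⟨i % 2, by omega⟩, ⟨i / 2, by omega⟩)
  left_inv x := by ext <;> simp <;> omega
  right_inv i := by ext; simp; omega

noncomputable def rotBlocks (p : ℕ) (θ : Fin p → ℝ) : Matrix (Fin (2 * p)) (Fin (2 * p)) ℝ :=
  reindexAlgEquiv ℝ ℝ (blockEquiv p) (blockDiagonal fun l => rot (θ l))

section rotBlocks

variable {p : ℕ}

lemma blockRot_eq_rotBlocks (A : Fin p → ℝ) (t : ℝ) :
    blockRot p A t = rotBlocks p (fun l => A l * t) := by
  ext i j
  simp [blockRot, rotBlocks, blockDiagonal_apply, blockEquiv, Fin.ext_iff]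

lemma bigA_eq_reindex_blockDiagonal (A : Fin p → ℝ) :
    bigA p A = reindexAlgEquiv ℝ ℝ (blockEquiv p)
      (blockDiagonal fun l => A l • (1 : Matrix (Fin 2) (Fin 2) ℝ)) := by
  ext i j
  simp only [bigA, coe_reindexAlgEquiv, reindex_apply, submatrix_apply, blockDiagonal_apply,
    diagonal_apply, Matrix.smul_apply, one_apply, blockEquiv, Equiv.symm_mk, Equiv.coe_fn_mk,
    Fin.ext_iff, smul_eq_mul, mul_ite, mul_one, mul_zero]
  split_ifs <;> first | rfl | omega

lemma rotBlocks_mem_unitaryGroup (θ : Fin p → ℝ) :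
    rotBlocks p θ ∈ unitaryGroup (Fin (2 * p)) ℝ :=
  reindexAlgEquiv_mem_unitaryGroup _
    (blockDiagonal_mem_unitaryGroup fun _ => rot_mem_unitaryGroup _)

lemma rotBlocks_add_pi (θ : Fin p → ℝ) :
    rotBlocks p (fun l => θ l + Real.pi) = -rotBlocks p θ := by
  simp only [rotBlocks, rot_add_pi]
  rw [← map_neg, ← blockDiagonal_neg]
  rfl

lemma rotBlocks_mul_bigA (θ A : Fin p → ℝ) :
    rotBlocks p θ * bigA p A =
      reindexAlgEquiv ℝ ℝ (blockEquiv p) (blockDiagonal fun l => A l • rot (θ l)) := by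
  simp only [rotBlocks, bigA_eq_reindex_blockDiagonal, ← map_mul, ← blockDiagonal_mul,
    Matrix.mul_smul, mul_one]

lemma hasDerivAt_rotBlocks_apply (A : Fin p → ℝ) (c t : ℝ) (i j : Fin (2 * p)) :
    HasDerivAt (fun s => rotBlocks p (fun l => A l * s + c) i j)
      ((rotBlocks p (fun l => A l * t + (c + Real.pi / 2)) * bigA p A) i j) t := by
  rw [rotBlocks_mul_bigA]
  simp only [rotBlocks, coe_reindexAlgEquiv, reindex_apply, submatrix_apply, blockDiagonal_apply,
    ← add_assoc]
  split_ifs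
  · exact hasDerivAt_rot_apply _ _ _ _ _
  · exact hasDerivAt_const _ _

lemma hasDerivAt_apM_rotBlocks (A : Fin p → ℝ) (c t : ℝ) (x : EuclideanSpace ℝ (Fin (2 * p))) :
    HasDerivAt (fun s => apM (rotBlocks p (fun l => A l * s + c)) x)
      (apM (rotBlocks p (fun l => A l * t + (c + Real.pi / 2))) (apM (bigA p A) x)) t := by
  rw [← apM_mul]
  exact hasDerivAt_apM (hasDerivAt_rotBlocks_apply A c t) x

end rotBlocks

theorem solution_of_relEq_general (p n : ℕ) (A : Fin p → ℝ) (m : Fin n → ℝ)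
    (Q : Fin n → EuclideanSpace ℝ (Fin (2 * p)))
    (heq : ∀ i : Fin n,
      -apM (bigA p A ^ 2) (Q i) =
        (∑ j ∈ Finset.univ.erase i,
          (m j / (1 - ⟪Q i, Q j⟫ ^ 2) ^ ((3 : ℝ) / 2)) • (Q j - ⟪Q i, Q j⟫ • Q i))
        - ‖apM (bigA p A) (Q i)‖ ^ 2 • Q i) :
    ∀ (i : Fin n) (t : ℝ),
      deriv (deriv (fun s => apM (blockRot p A s) (Q i))) t =
        (∑ j ∈ Finset.univ.erase i,
          (m j / (1 - ⟪apM (blockRot p A t) (Q i), apM (blockRot p A t) (Q j)⟫ ^ 2)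
              ^ ((3 : ℝ) / 2)) •
            (apM (blockRot p A t) (Q j) -
              ⟪apM (blockRot p A t) (Q i), apM (blockRot p A t) (Q j)⟫ •
                apM (blockRot p A t) (Q i)))
        - ⟪deriv (fun s => apM (blockRot p A s) (Q i)) t,
            deriv (fun s => apM (blockRot p A s) (Q i)) t⟫ • apM (blockRot p A t) (Q i) := by
  intro i t
  have hvel : deriv (fun s => apM (blockRot p A s) (Q i)) =
      fun u => apM (rotBlocks p fun l => A l * u + Real.pi / 2) (apM (bigA p A) (Q i)) := by
    funext u
    simpa [blockRot_eq_rotBlocks] using (hasDerivAt_apM_rotBlocks A 0 u (Q i)).deriv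
  have hacc : deriv (deriv (fun s => apM (blockRot p A s) (Q i))) t =
      apM (blockRot p A t) (-apM (bigA p A ^ 2) (Q i)) := by
    rw [hvel, (hasDerivAt_apM_rotBlocks A (Real.pi / 2) t _).deriv, add_halves, rotBlocks_add_pi,
      blockRot_eq_rotBlocks, sq, apM_mul]
    simp only [apM_eq_toEuclideanCLM, map_neg, _root_.neg_apply]
  rw [hacc, heq i, hvel, blockRot_eq_rotBlocks]
  simp only [apM_eq_toEuclideanCLM, map_sub, map_sum, map_smul,
    inner_toEuclideanCLM_of_mem_unitaryGroup (rotBlocks_mem_unitaryGroup _),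
    real_inner_self_eq_norm_sq]

/-- If the configuration `Q_1, ..., Q_n` on the sphere satisfies the algebraic
relative-equilibrium system, then `q_i(t) = T_k(At) Q_i` solves the curved `n`-body
equations. -/
theorem solution_of_relEq (p n : ℕ) (A : Fin p → ℝ) (m : Fin n → ℝ)
    (Q : Fin n → EuclideanSpace ℝ (Fin (2 * p)))
    (hm : ∀ j, 0 < m j) (hQ : ∀ i, ‖Q i‖ = 1)
    (hsep : ∀ i j, i ≠ j → ⟪Q i, Q j⟫ ^ 2 ≠ 1)
    (heq : ∀ i : Fin n,
      -apM (bigA p A ^ 2) (Q i) =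
        (∑ j ∈ Finset.univ.erase i,
          (m j / (1 - ⟪Q i, Q j⟫ ^ 2) ^ ((3 : ℝ) / 2)) • (Q j - ⟪Q i, Q j⟫ • Q i))
        - ‖apM (bigA p A) (Q i)‖ ^ 2 • Q i) :
    ∀ (i : Fin n) (t : ℝ),
      deriv (deriv (fun s => apM (blockRot p A s) (Q i))) t =
        (∑ j ∈ Finset.univ.erase i,
          (m j / (1 - ⟪apM (blockRot p A t) (Q i), apM (blockRot p A t) (Q j)⟫ ^ 2)
              ^ ((3 : ℝ) / 2)) •
            (apM (blockRot p A t) (Q j) -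
              ⟪apM (blockRot p A t) (Q i), apM (blockRot p A t) (Q j)⟫ •
                apM (blockRot p A t) (Q i)))
        - ⟪deriv (fun s => apM (blockRot p A s) (Q i)) t,
            deriv (fun s => apM (blockRot p A s) (Q i)) t⟫ • apM (blockRot p A t) (Q i) :=
  solution_of_relEq_general p n A m Q heq
end
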